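/- arXiv:2408.10331 — 5 statements merged into one kernel-verified Lean document; each statement's English description precedes it below -/
import Mathlib

section
/- Let m = ab with a, b positive integers. Then (∑_{i=1}^{a} x^i)·(∑_{i=0}^{b−1} x^{ia})^2 = ∑_{i=1}^{b} ∑_{j=1}^{a} i·x^{j+a(i−1)} + ∑_{i=1}^{b−1} ∑_{j=1}^{a} (b−i)·x^{j+m+ia−a}. -/
open Polynomial Finset

lemma keyaux (y : ℤ[X]) (b : ℕ) :
    (∑ i ∈ range (b+1), y ^ i)^2 =
      (∑ i ∈ range (b+1), C ((i+1 : ℕ) : ℤ) * y ^ i)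
        + ∑ i ∈ range b, C ((b-i : ℕ) : ℤ) * y ^ (b+1+i) := by
  induction b with
  | zero => simp
  | succ b ih =>
    rw [Finset.sum_range_succ _ (b+1), add_sq, ih]
    have hT1 : ∑ i ∈ range (b+2), C ((b+2-i:ℕ):ℤ) * y^(b+1+i)
        = C ((b+2:ℕ):ℤ) * y^(b+1) + ∑ i ∈ range (b+1), C ((b+1-i:ℕ):ℤ) * y^(b+2+i) := by
      rw [Finset.sum_range_succ' _ (b+1), add_comm]
      congr 1
      all_goals try simp
      all_goals apply Finset.sum_congr rfl <;>
        (intro i hi;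
         have e1 : b+2-(i+1) = b+1-i := by omega;
         have e2 : b+1+(i+1) = b+2+i := by omega;
         rw [e2])
    have hT2 : ∑ i ∈ range (b+2), C ((b+2-i:ℕ):ℤ) * y^(b+1+i)
        = (∑ i ∈ range b, C ((b-i:ℕ):ℤ) * y^(b+1+i))
          + 2 * (∑ i ∈ range (b+1), y^i) * y^(b+1) + (y^(b+1))^2 := by
      rw [Finset.sum_range_succ _ (b+1), Finset.sum_range_succ _ b]
      rw [Finset.mul_sum, Finset.sum_mul, Finset.sum_range_succ _ b]
      have he : ∀ i ∈ range b, C ((b+2-i:ℕ):ℤ) * y^(b+1+i)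
          = C ((b-i:ℕ):ℤ) * y^(b+1+i) + 2 * y^i * y^(b+1) := by
        intro i hi
        simp only [Finset.mem_range] at hi
        have : ((b+2-i:ℕ):ℤ) = ((b-i:ℕ):ℤ) + 2 := by omega
        rw [this, map_add, map_ofNat]
        ring
      rw [Finset.sum_congr rfl he, Finset.sum_add_distrib]
      have h1 : ((b+2-b:ℕ):ℤ) = 2 := by omega
      have h2 : ((b+2-(b+1):ℕ):ℤ) = 1 := by omega
      rw [h1, h2, map_ofNat, map_one]
      ring
    rw [hT2] at hT1
    rw [Finset.sum_range_succ _ (b+1)]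
    have h3 : ((b+1+1:ℕ):ℤ) = ((b+2:ℕ):ℤ) := by omega
    rw [h3]
    linear_combination hT1

lemma icc_sum (n : ℕ) (f : ℕ → ℤ[X]) :
    ∑ i ∈ Finset.Icc 1 n, f i = ∑ i ∈ Finset.range n, f (1+i) := by
  rw [← Finset.Ico_add_one_right_eq_Icc, Finset.sum_Ico_eq_sum_range]
  simp

theorem big_die_explicit (a b m : ℕ) (ha : 0 < a) (hb : 0 < b) (hm : m = a * b) :
    (∑ i ∈ Finset.Icc 1 a, (X : ℤ[X]) ^ i) *
        (∑ i ∈ Finset.range b, (X : ℤ[X]) ^ (i * a)) ^ 2 =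
      (∑ i ∈ Finset.Icc 1 b, ∑ j ∈ Finset.Icc 1 a, C (i : ℤ) * X ^ (j + a * (i - 1))) +
        ∑ i ∈ Finset.Icc 1 (b - 1), ∑ j ∈ Finset.Icc 1 a,
          C ((b - i : ℕ) : ℤ) * X ^ (j + m + a * (i - 1)) := by
  obtain ⟨c, rfl⟩ : ∃ c, b = c + 1 := ⟨b - 1, by omega⟩
  subst hm
  have hQ : ∑ i ∈ Finset.range (c+1), (X : ℤ[X]) ^ (i * a)
      = ∑ i ∈ Finset.range (c+1), ((X : ℤ[X]) ^ a) ^ i := by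
    refine Finset.sum_congr rfl fun i _ => ?_
    rw [← pow_mul, mul_comm]
  rw [hQ, keyaux, mul_add, icc_sum, icc_sum]
  simp only [icc_sum, Nat.add_sub_cancel]
  congr 1
  · rw [Finset.mul_sum]
    refine Finset.sum_congr rfl fun i _ => ?_
    rw [Finset.sum_mul]
    refine Finset.sum_congr rfl fun j _ => ?_
    rw [show 1 + i - 1 = i from by omega, show (1+i:ℕ) = i+1 from by omega,
      show 1 + j + a * i = (1 + j) + a * i from rfl, pow_add, ← pow_mul]
    ring
  · rw [Finset.mul_sum]
    refine Finset.sum_congr rfl fun i _ => ?_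
    rw [Finset.sum_mul]
    refine Finset.sum_congr rfl fun j _ => ?_
    rw [show 1 + i - 1 = i from by omega, show c + 1 - (1 + i) = c - i from by omega,
      show 1 + j + a * (c+1) + a * i = (1 + j) + a * (c + 1 + i) from by ring,
      pow_add, ← pow_mul]
    ring
end

section
/- Let p, q be distinct primes. The only way to factor x^2·Φ_p(x)·Φ_q(x) as a product P(x)·Q(x) of two polynomials with nonnegative integer coefficients satisfying P(0)=Q(0)=0, P(1)=p and Q(1)=q is P = x·Φ_p and Q = x·Φ_q. -/
/-!
Removing the factor `X` from `P` and `Q` leaves a factorisation `A * B = Φ_p * Φ_q` in `ℤ[X]`.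
Both cyclotomic factors are irreducible, and evaluation at `1` (where `Φ_p(1) = p`, `Φ_q(1) = q`)
tells them apart: `Φ_p` cannot divide `B`, since then `p ∣ q`, so `A = Φ_p * C` with `C(1) = 1`;
and `C * B = Φ_q` forces `C` to be a unit, i.e. `C = 1`, because `B` cannot be one as `q` is not.
-/

open Polynomial

namespace Polynomial

variable {R : Type*} [CommRing R] [IsDomain R]

theorem eq_one_of_isUnit_of_eval_eq_one {u : R[X]} {x : R} (hu : IsUnit u) (h : u.eval x = 1) :
    u = 1 := by
  obtain ⟨r, -, rfl⟩ := Polynomial.isUnit_iff.1 hu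
  rw [eval_C] at h
  rw [h, map_one]

theorem eq_and_eq_of_mul_eq_mul_of_eval_eq {f g A B : R[X]} {x : R} (hf : Prime f)
    (hg : Irreducible g) (hfx : f.eval x ≠ 0) (hfg : ¬ f.eval x ∣ g.eval x)
    (hgx : ¬ IsUnit (g.eval x)) (h : A * B = f * g) (hA : A.eval x = f.eval x) :
    A = f ∧ B = g := by
  have hfA : f ∣ A := by
    refine (hf.dvd_or_dvd (Dvd.intro g h.symm)).resolve_right ?_
    rintro ⟨D, rfl⟩
    have hAD : A * D = g := mul_left_cancel₀ hf.ne_zero (by rw [← h]; ring)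
    exact hfg (hA ▸ ⟨D.eval x, by rw [← hAD, eval_mul]⟩)
  obtain ⟨C, rfl⟩ := hfA
  have hCB : C * B = g := mul_left_cancel₀ hf.ne_zero (by rw [← h]; ring)
  have hC : C.eval x = 1 := mul_left_cancel₀ hfx (by rw [← eval_mul, hA, mul_one])
  have hCunit : IsUnit C := (hg.isUnit_or_isUnit hCB.symm).resolve_right fun hB =>
    hgx (by rw [← hCB, eval_mul, hC, one_mul]; exact hB.map (evalRingHom x))
  obtain rfl := eq_one_of_isUnit_of_eval_eq_one hCunit hC
  rw [one_mul] at hCB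
  exact ⟨mul_one f, hCB⟩

theorem eq_cyclotomic_of_mul_eq_cyclotomic_mul {p q : ℕ} (hp : p.Prime) (hq : q.Prime)
    (hpq : p ≠ q) {A B : ℤ[X]} (h : A * B = cyclotomic p ℤ * cyclotomic q ℤ)
    (hA : A.eval 1 = p) :
    A = cyclotomic p ℤ ∧ B = cyclotomic q ℤ := by
  have := Fact.mk hp
  have := Fact.mk hq
  refine eq_and_eq_of_mul_eq_mul_of_eval_eq (x := 1) (cyclotomic.irreducible hp.pos).prime
    (cyclotomic.irreducible hq.pos) ?_ ?_ ?_ h ?_ <;>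
    simp only [eval_one_cyclotomic_prime, hA]
  · exact_mod_cast hp.ne_zero
  · exact_mod_cast (Nat.prime_dvd_prime_iff_eq hp hq).not.2 hpq
  · exact (Nat.prime_iff_prime_int.1 hq).not_isUnit

end Polynomial

theorem no_relabeling_two_primes_general (p q : ℕ) (hp : p.Prime) (hq : q.Prime) (hpq : p ≠ q)
    (P Q : ℤ[X])
    (hP0 : P.eval 0 = 0) (hQ0 : Q.eval 0 = 0)
    (hP1 : P.eval 1 = p)
    (hPQ : P * Q = X ^ 2 * cyclotomic p ℤ * cyclotomic q ℤ) :
    P = X * cyclotomic p ℤ ∧ Q = X * cyclotomic q ℤ := by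
  obtain ⟨A, rfl⟩ : X ∣ P := X_dvd_iff.2 (by rwa [coeff_zero_eq_eval_zero])
  obtain ⟨B, rfl⟩ : X ∣ Q := X_dvd_iff.2 (by rwa [coeff_zero_eq_eval_zero])
  have hAB : A * B = cyclotomic p ℤ * cyclotomic q ℤ :=
    mul_left_cancel₀ (pow_ne_zero 2 X_ne_zero) (by linear_combination hPQ)
  obtain ⟨rfl, rfl⟩ :=
    eq_cyclotomic_of_mul_eq_cyclotomic_mul hp hq hpq hAB (by simpa using hP1)
  exact ⟨rfl, rfl⟩

theorem no_relabeling_two_primes (p q : ℕ) (hp : p.Prime) (hq : q.Prime) (hpq : p ≠ q)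
    (P Q : ℤ[X]) (hP : ∀ n, 0 ≤ P.coeff n) (hQ : ∀ n, 0 ≤ Q.coeff n)
    (hP0 : P.eval 0 = 0) (hQ0 : Q.eval 0 = 0)
    (hP1 : P.eval 1 = p) (hQ1 : Q.eval 1 = q)
    (hPQ : P * Q = X ^ 2 * cyclotomic p ℤ * cyclotomic q ℤ) :
    P = X * cyclotomic p ℤ ∧ Q = X * cyclotomic q ℤ :=
  no_relabeling_two_primes_general p q hp hq hpq P Q hP0 hQ0 hP1 hPQ
end

section
/- Let p be prime and k ≥ 1. The number of polynomials P with nonnegative coefficients, P(0)=0, P(1)=p, such that P divides x^2·Φ_p(x)^2·Φ_{p^2}(x)·⋯·Φ_{p^k}(x) with cofactor also having nonnegative coefficients, vanishing at 0, and value p^k at 1, is exactly k; explicitly the factorizations are P = x·Φ_{p^i} for each 1 ≤ i ≤ k. -/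
open Polynomial

/-!
Evaluating at `0` shows `X ∣ P` and `X ∣ Q`, so `P = X * P₁` with `P₁` dividing
`Φ_p² Φ_{p²} ⋯ Φ_{p^k}`. Each of these cyclotomic factors is prime in `ℤ[X]` and takes the value `p`
at `1`, so `P₁` is, up to a unit `±1`, a product of `m` of them, and `P₁(1) = p` forces the unit
to be `1` and `m = 1`. Conversely `X * Φ_{p^i}`, with `X` times the remaining factors as cofactor,
is a solution: `Φ_{p^i} = ∑_{j < p} X^(j p^(i-1))` has nonnegative coefficients.
-/

section NonnegCoeff

variable {R : Type*} [CommSemiring R] [PartialOrder R] [IsOrderedRing R]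

theorem Polynomial.coeff_X_nonneg (n : ℕ) : 0 ≤ (X : R[X]).coeff n := by
  rw [coeff_X]
  split_ifs
  exacts [zero_le_one, le_rfl]

theorem Polynomial.coeff_mul_nonneg {f g : R[X]} (hf : ∀ n, 0 ≤ f.coeff n)
    (hg : ∀ n, 0 ≤ g.coeff n) (n : ℕ) : 0 ≤ (f * g).coeff n := by
  rw [coeff_mul]
  exact Finset.sum_nonneg fun x _ => mul_nonneg (hf _) (hg _)

theorem Polynomial.coeff_multiset_prod_nonneg {s : Multiset R[X]}
    (hs : ∀ f ∈ s, ∀ n, 0 ≤ f.coeff n) (n : ℕ) : 0 ≤ s.prod.coeff n := by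
  refine Multiset.prod_induction (fun f => ∀ n, 0 ≤ f.coeff n) s
    (fun _ _ => coeff_mul_nonneg) (fun n => ?_) hs n
  rw [coeff_one]
  split_ifs
  exacts [zero_le_one, le_rfl]

end NonnegCoeff

theorem Polynomial.coeff_cyclotomic_prime_pow_nonneg {R : Type*} [CommRing R] [PartialOrder R]
    [IsOrderedRing R] {p : ℕ} (hp : p.Prime) (j n : ℕ) :
    0 ≤ (cyclotomic (p ^ (j + 1)) R).coeff n := by
  rw [cyclotomic_prime_pow_eq_geom_sum hp, finsetSum_coeff]
  refine Finset.sum_nonneg fun i _ => ?_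
  rw [← pow_mul, coeff_X_pow]
  split_ifs
  exacts [zero_le_one, le_rfl]

theorem Polynomial.eval_multiset_prod_of_forall_eval_eq {R : Type*} [CommSemiring R]
    {s : Multiset R[X]} {x a : R} (h : ∀ q ∈ s, q.eval x = a) :
    s.prod.eval x = a ^ Multiset.card s := by
  rw [eval_multiset_prod, Multiset.map_congr rfl h, Multiset.map_const', Multiset.prod_replicate]

theorem Multiset.exists_le_associated_prod_of_dvd_prod {M : Type*} [CommMonoidWithZero M]
    [IsCancelMulZero M] {s : Multiset M} (hs : ∀ q ∈ s, Prime q) {a : M} (ha : a ∣ s.prod) :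
    ∃ t ≤ s, Associated a t.prod := by
  induction s using Multiset.induction generalizing a with
  | empty =>
    rw [Multiset.prod_zero] at ha
    exact ⟨0, le_rfl, by simpa [associated_one_iff_isUnit] using isUnit_of_dvd_one ha⟩
  | cons q s ih =>
    have hq : Prime q := hs q (Multiset.mem_cons_self q s)
    have hs' : ∀ r ∈ s, Prime r := fun r hr => hs r (Multiset.mem_cons_of_mem hr)
    rw [Multiset.prod_cons] at ha
    rcases hq.left_dvd_or_dvd_right_of_dvd_mul ha with ⟨b, rfl⟩ | ha
    · obtain ⟨t, hts, hb⟩ := ih hs' ((mul_dvd_mul_iff_left hq.ne_zero).mp ha)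
      exact ⟨q ::ₘ t, Multiset.cons_le_cons q hts, by
        rw [Multiset.prod_cons]; exact hb.mul_left q⟩
    · obtain ⟨t, hts, ha⟩ := ih hs' ha
      exact ⟨t, hts.trans (Multiset.le_cons_self s q), ha⟩

theorem Polynomial.mem_of_dvd_multiset_prod_of_eval_one_eq {s : Multiset ℤ[X]} {p : ℤ}
    (hp : 1 < p) (hs : ∀ q ∈ s, Prime q) (hs1 : ∀ q ∈ s, q.eval 1 = p) {P : ℤ[X]}
    (hPs : P ∣ s.prod) (hP1 : P.eval 1 = p) : P ∈ s := by
  obtain ⟨t, hts, u, hu⟩ := Multiset.exists_le_associated_prod_of_dvd_prod hs hPs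
  obtain ⟨r, hr, hru⟩ := Polynomial.isUnit_iff.mp u.isUnit
  have ht1 : t.prod.eval 1 = p ^ Multiset.card t :=
    eval_multiset_prod_of_forall_eval_eq fun q hq => hs1 q (Multiset.mem_of_le hts hq)
  have heval : p * r = p ^ Multiset.card t := by
    simpa [← hru, hP1, ht1] using congrArg (eval 1) hu
  have hr1 : r = 1 := by
    rcases Int.isUnit_iff.mp hr with rfl | rfl
    · rfl
    · nlinarith [pow_pos (by omega : 0 < p) (Multiset.card t)]
  have hcard : Multiset.card t = 1 :=
    Int.pow_right_injective (a := p) (by omega) (by simpa [hr1] using heval.symm)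
  obtain ⟨f, rfl⟩ := Multiset.card_eq_one.mp hcard
  have hPf : P = f := by simpa [← hru, hr1] using hu
  exact hPf ▸ Multiset.mem_of_le hts (Multiset.mem_singleton_self f)

/-- `Φ_p` occurs twice: once from the `p`-sided die and once, as `Φ_{p^1}`, from the other. -/
noncomputable def primePowCyclotomicFactors (p k : ℕ) : Multiset ℤ[X] :=
  (1 ::ₘ (Finset.Icc 1 k).val).map fun i => cyclotomic (p ^ i) ℤ

namespace primePowCyclotomicFactors

variable {p k : ℕ}

theorem prod_eq (p k : ℕ) : (primePowCyclotomicFactors p k).prod =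
    cyclotomic p ℤ * ∏ i ∈ Finset.Icc 1 k, cyclotomic (p ^ i) ℤ := by
  rw [primePowCyclotomicFactors, Multiset.map_cons, Multiset.prod_cons, pow_one]
  rfl

theorem card_eq (p k : ℕ) : Multiset.card (primePowCyclotomicFactors p k) = k + 1 := by
  simp [primePowCyclotomicFactors]

theorem mem_iff (hk : 1 ≤ k) {q : ℤ[X]} :
    q ∈ primePowCyclotomicFactors p k ↔ ∃ i ∈ Finset.Icc 1 k, cyclotomic (p ^ i) ℤ = q := by
  have h1 : 1 ∈ Finset.Icc 1 k := Finset.mem_Icc.mpr ⟨le_rfl, hk⟩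
  simp only [primePowCyclotomicFactors, Multiset.mem_map, Multiset.mem_cons, Finset.mem_val]
  exact ⟨fun ⟨i, hi, hq⟩ => ⟨i, hi.elim (· ▸ h1) id, hq⟩, fun ⟨i, hi, hq⟩ => ⟨i, .inr hi, hq⟩⟩

theorem exists_eq_succ_of_mem (hk : 1 ≤ k) {q : ℤ[X]} (hq : q ∈ primePowCyclotomicFactors p k) :
    ∃ j, cyclotomic (p ^ (j + 1)) ℤ = q := by
  obtain ⟨i, hi, rfl⟩ := (mem_iff hk).mp hq
  exact ⟨i - 1, by rw [Nat.sub_add_cancel (Finset.mem_Icc.mp hi).1]⟩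

theorem prime_of_mem (hp : p.Prime) (hk : 1 ≤ k) {q : ℤ[X]}
    (hq : q ∈ primePowCyclotomicFactors p k) : Prime q := by
  obtain ⟨j, rfl⟩ := exists_eq_succ_of_mem hk hq
  exact (cyclotomic.irreducible (pow_pos hp.pos _)).prime

theorem eval_one_of_mem (hp : p.Prime) (hk : 1 ≤ k) {q : ℤ[X]}
    (hq : q ∈ primePowCyclotomicFactors p k) : q.eval 1 = p := by
  have : Fact p.Prime := ⟨hp⟩
  obtain ⟨j, rfl⟩ := exists_eq_succ_of_mem hk hq
  exact eval_one_cyclotomic_prime_pow j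

theorem coeff_nonneg_of_mem (hp : p.Prime) (hk : 1 ≤ k) {q : ℤ[X]}
    (hq : q ∈ primePowCyclotomicFactors p k) (n : ℕ) :
    0 ≤ q.coeff n := by
  obtain ⟨j, rfl⟩ := exists_eq_succ_of_mem hk hq
  exact coeff_cyclotomic_prime_pow_nonneg hp j n

end primePowCyclotomicFactors

open primePowCyclotomicFactors

theorem eq_X_mul_cyclotomic_of_mul_eq {p k : ℕ} (hp : p.Prime) (hk : 1 ≤ k) {P Q : ℤ[X]}
    (hP0 : P.eval 0 = 0) (hP1 : P.eval 1 = p) (hQ0 : Q.eval 0 = 0)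
    (hPQ : P * Q = X ^ 2 * (primePowCyclotomicFactors p k).prod) :
    ∃ i ∈ Finset.Icc 1 k, X * cyclotomic (p ^ i) ℤ = P := by
  obtain ⟨P₁, rfl⟩ : X ∣ P := X_dvd_iff.mpr (by rwa [coeff_zero_eq_eval_zero])
  obtain ⟨Q₁, rfl⟩ : X ∣ Q := X_dvd_iff.mpr (by rwa [coeff_zero_eq_eval_zero])
  have hdvd : P₁ ∣ (primePowCyclotomicFactors p k).prod :=
    ⟨Q₁, mul_left_cancel₀ (pow_ne_zero 2 X_ne_zero) (by rw [← hPQ]; ring)⟩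
  have hmem : P₁ ∈ primePowCyclotomicFactors p k :=
    mem_of_dvd_multiset_prod_of_eval_one_eq (by exact_mod_cast hp.one_lt)
      (fun _ => prime_of_mem hp hk) (fun _ => eval_one_of_mem hp hk) hdvd (by simpa using hP1)
  obtain ⟨i, hi, rfl⟩ := (mem_iff hk).mp hmem
  exact ⟨i, hi, rfl⟩

theorem exists_cofactor_of_mem {p k : ℕ} (hp : p.Prime) (hk : 1 ≤ k) {f : ℤ[X]}
    (hf : f ∈ primePowCyclotomicFactors p k) :
    ∃ Q : ℤ[X], (∀ n, 0 ≤ Q.coeff n) ∧ Q.eval 0 = 0 ∧ Q.eval 1 = (p : ℤ) ^ k ∧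
      X * f * Q = X ^ 2 * (primePowCyclotomicFactors p k).prod := by
  classical
  have hmem {q : ℤ[X]} (hq : q ∈ (primePowCyclotomicFactors p k).erase f) :
      q ∈ primePowCyclotomicFactors p k :=
    Multiset.mem_of_mem_erase hq
  refine ⟨X * ((primePowCyclotomicFactors p k).erase f).prod,
    coeff_mul_nonneg coeff_X_nonneg
      (coeff_multiset_prod_nonneg fun q hq => coeff_nonneg_of_mem hp hk (hmem hq)),
    by simp, ?_, ?_⟩
  · rw [eval_mul, eval_X, one_mul,
      eval_multiset_prod_of_forall_eval_eq fun q hq => eval_one_of_mem hp hk (hmem hq),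
      Multiset.card_erase_of_mem hf, card_eq, Nat.pred_succ]
  · rw [← Multiset.prod_erase hf]
    ring

theorem relabelings_p_and_pk (p k : ℕ) (hp : p.Prime) (hk : 1 ≤ k) :
    {P : ℤ[X] | (∀ n, 0 ≤ P.coeff n) ∧ P.eval 0 = 0 ∧ P.eval 1 = p ∧
        ∃ Q : ℤ[X], (∀ n, 0 ≤ Q.coeff n) ∧ Q.eval 0 = 0 ∧ Q.eval 1 = (p : ℤ) ^ k ∧
          P * Q = X ^ 2 * cyclotomic p ℤ * ∏ i ∈ Finset.Icc 1 k, cyclotomic (p ^ i) ℤ} =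
      ↑((Finset.Icc 1 k).image fun i => X * cyclotomic (p ^ i) ℤ) ∧
    ((Finset.Icc 1 k).image fun i => (X : ℤ[X]) * cyclotomic (p ^ i) ℤ).card = k := by
  refine ⟨Set.ext fun P => ?_, ?_⟩
  rw [Finset.coe_image, Set.mem_image]
  refine ⟨?_, ?_⟩
  · rintro ⟨-, hP0, hP1, Q, -, hQ0, -, hPQ⟩
    exact eq_X_mul_cyclotomic_of_mul_eq hp hk hP0 hP1 hQ0 (by rw [hPQ, prod_eq, mul_assoc])
  · rintro ⟨i, hi, rfl⟩
    have hmem : cyclotomic (p ^ i) ℤ ∈ primePowCyclotomicFactors p k :=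
      (mem_iff hk).mpr ⟨i, hi, rfl⟩
    obtain ⟨Q, hQ, hQ0, hQ1, hPQ⟩ := exists_cofactor_of_mem hp hk hmem
    refine ⟨coeff_mul_nonneg coeff_X_nonneg (coeff_nonneg_of_mem hp hk hmem), by simp,
      by simp [eval_one_of_mem hp hk hmem], Q, hQ, hQ0, hQ1, ?_⟩
    rw [hPQ, prod_eq, mul_assoc]
  · rw [Finset.card_image_of_injective _ fun a b hab =>
      Nat.pow_right_injective hp.two_le (cyclotomic_injective (mul_left_cancel₀ X_ne_zero hab)),
      Nat.card_Icc, Nat.add_sub_cancel]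
end

section
/- For each 1 ≤ i ≤ k, the polynomial (x·Φ_{p^i}(x)) · (x·∏_{j=1, j≠i}^{k} Φ_{p^j}(x) · Φ_p(x)) equals x^2·Φ_p(x)·∏_{j=1}^{k} Φ_{p^j}(x), and both factors have nonnegative coefficients. -/
open Polynomial

lemma mul_coeff_nonneg {f g : ℤ[X]} (hf : ∀ n, 0 ≤ f.coeff n) (hg : ∀ n, 0 ≤ g.coeff n) :
    ∀ n, 0 ≤ (f * g).coeff n := by
  intro n
  rw [coeff_mul]
  exact Finset.sum_nonneg fun x _ => mul_nonneg (hf _) (hg _)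

lemma cyclotomic_pp_coeff_nonneg (p m : ℕ) (hp : p.Prime) :
    ∀ n, 0 ≤ (cyclotomic (p ^ (m + 1)) ℤ).coeff n := by
  intro n
  rw [cyclotomic_prime_pow_eq_geom_sum hp, Polynomial.finset_sum_coeff]
  refine Finset.sum_nonneg fun x _ => ?_
  rw [← pow_mul, Polynomial.coeff_X_pow]
  split <;> norm_num

theorem relabeling_solutions_p_pk (p k i : ℕ) (hp : p.Prime) (hk : 1 ≤ k)
    (hi1 : 1 ≤ i) (hik : i ≤ k) :
    (X * cyclotomic (p ^ i) ℤ) *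
        (X * (∏ j ∈ (Finset.Icc 1 k).erase i, cyclotomic (p ^ j) ℤ) * cyclotomic p ℤ) =
      X ^ 2 * cyclotomic p ℤ * ∏ j ∈ Finset.Icc 1 k, cyclotomic (p ^ j) ℤ ∧
    (∀ n, 0 ≤ ((X : ℤ[X]) * cyclotomic (p ^ i) ℤ).coeff n) ∧
    (∀ n, 0 ≤ ((X : ℤ[X]) * (∏ j ∈ (Finset.Icc 1 k).erase i, cyclotomic (p ^ j) ℤ) *
        cyclotomic p ℤ).coeff n) := by
  have hX : ∀ n, 0 ≤ (X : ℤ[X]).coeff n := by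
    intro n; rw [← pow_one (X : ℤ[X]), Polynomial.coeff_X_pow]; split <;> norm_num
  have hcyc : ∀ m, 1 ≤ m → ∀ n, 0 ≤ (cyclotomic (p ^ m) ℤ).coeff n := by
    intro m hm
    obtain ⟨m', rfl⟩ := Nat.exists_eq_add_of_le hm
    simpa [Nat.add_comm] using cyclotomic_pp_coeff_nonneg p m' hp
  have hprod : ∀ n, 0 ≤ (∏ j ∈ (Finset.Icc 1 k).erase i, cyclotomic (p ^ j) ℤ).coeff n := by
    refine Finset.prod_induction _ (fun (f : ℤ[X]) => ∀ n, 0 ≤ f.coeff n)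
      (fun f g hf hg => mul_coeff_nonneg hf hg) (fun n => by simp [Polynomial.coeff_one]; split <;> norm_num) ?_
    intro j hj
    exact hcyc j (Finset.mem_Icc.mp (Finset.mem_of_mem_erase hj)).1
  have hp1 : ∀ n, 0 ≤ (cyclotomic p ℤ).coeff n := by
    simpa using hcyc 1 le_rfl
  refine ⟨?_, mul_coeff_nonneg hX (hcyc i hi1),
    mul_coeff_nonneg (mul_coeff_nonneg hX hprod) hp1⟩
  rw [← Finset.mul_prod_erase _ _ (Finset.mem_Icc.mpr ⟨hi1, hik⟩)]
  ring
end

section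
/- For distinct primes p and q, the polynomial A = Φ_q(x)·Φ_p(x)^2·Φ_{pq}(x)·Φ_{p^2 q}(x)^2 (i.e., exponent vector (2,0,1,2) for the p^2 q case) has a negative coefficient; specifically, the coefficient of x^{2p−1} equals −p. -/
/-!
Write `A = Φ_q Φ_p² Φ_{pq} Φ_{p²q}²`. From `Φ_p (X - 1) = X^p - 1`,
`Φ_{pq} (X^p - 1)(X^q - 1) = (X^{pq} - 1)(X - 1)` and its image under `X ↦ X^p`, one gets
`A ((X - 1)(X^{p²} - 1)(X^{pq} - 1))² = (X^p - 1)³ (X^{p²q} - 1)² (X^{pq} - 1)`.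
Modulo `X^{2p}` every `X^{p²}`, `X^{pq}`, `X^{p²q}` vanishes, so `A (X - 1)² ≡ 1 - 3X^p`.
Since `Σ_{n<N} (n+1) Xⁿ` inverts `(X - 1)²` modulo `X^N`, `A ≡ (1 - 3X^p) Σ_{n<2p} (n+1) Xⁿ`,
whose coefficient of `X^{2p-1}` is `2p - 3p = -p`.
-/

open Polynomial

section Cyclotomic

variable (R : Type*) [CommRing R] {p q : ℕ}

theorem cyclotomic_prime_mul_prime_mul_X_pow_sub_one_mul (hp : p.Prime) (hq : q.Prime)
    (hpq : p ≠ q) :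
    cyclotomic (p * q) R * (X ^ p - 1) * (X ^ q - 1) = (X ^ (p * q) - 1) * (X - 1) := by
  have := Fact.mk hp
  have := Fact.mk hq
  have hqp : ¬q ∣ p := fun h => hpq ((Nat.prime_dvd_prime_iff_eq hq hp).mp h).symm
  have h := congrArg (expand R q) (cyclotomic_prime_mul_X_sub_one R p)
  simp only [map_mul, map_sub, map_pow, map_one, expand_X,
    cyclotomic_expand_eq_cyclotomic_mul hq hqp, ← pow_mul] at h
  linear_combination (X - 1) * h - cyclotomic (p * q) R * (X ^ q - 1) *
    cyclotomic_prime_mul_X_sub_one R p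

theorem cyclotomic_prime_sq_mul_prime_mul_X_pow_sub_one_mul (hp : p.Prime) (hq : q.Prime)
    (hpq : p ≠ q) :
    cyclotomic (p ^ 2 * q) R * (X ^ p ^ 2 - 1) * (X ^ (p * q) - 1) =
      (X ^ (p ^ 2 * q) - 1) * (X ^ p - 1) := by
  have h := congrArg (expand R p) (cyclotomic_prime_mul_prime_mul_X_pow_sub_one_mul R hp hq hpq)
  simp only [map_mul, map_sub, map_pow, map_one, expand_X,
    cyclotomic_expand_eq_cyclotomic hp (dvd_mul_right p q), ← pow_mul,
    show p * q * p = p ^ 2 * q by ring] at h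
  linear_combination h

noncomputable def relabelingCandidate (p q : ℕ) : R[X] :=
  cyclotomic q R * cyclotomic p R ^ 2 * cyclotomic (p * q) R * cyclotomic (p ^ 2 * q) R ^ 2

theorem relabelingCandidate_mul_sq (hp : p.Prime) (hq : q.Prime) (hpq : p ≠ q) :
    relabelingCandidate R p q * ((X - 1) * (X ^ p ^ 2 - 1) * (X ^ (p * q) - 1)) ^ 2 =
      (X ^ p - 1) ^ 3 * (X ^ (p ^ 2 * q) - 1) ^ 2 * (X ^ (p * q) - 1) := by
  have := Fact.mk hp
  have := Fact.mk hq
  calc relabelingCandidate R p q * ((X - 1) * (X ^ p ^ 2 - 1) * (X ^ (p * q) - 1)) ^ 2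
      = cyclotomic q R * (X - 1) * (cyclotomic p R * (X - 1)) * cyclotomic p R *
          cyclotomic (p * q) R *
          (cyclotomic (p ^ 2 * q) R * (X ^ p ^ 2 - 1) * (X ^ (p * q) - 1)) ^ 2 := by
        rw [relabelingCandidate]; ring
    _ = cyclotomic p R * (cyclotomic (p * q) R * (X ^ p - 1) * (X ^ q - 1)) *
          (X ^ (p ^ 2 * q) - 1) ^ 2 * (X ^ p - 1) ^ 2 := by
        rw [cyclotomic_prime_mul_X_sub_one, cyclotomic_prime_mul_X_sub_one,
          cyclotomic_prime_sq_mul_prime_mul_X_pow_sub_one_mul R hp hq hpq]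
        ring
    _ = cyclotomic p R * (X - 1) * (X ^ (p * q) - 1) *
          (X ^ (p ^ 2 * q) - 1) ^ 2 * (X ^ p - 1) ^ 2 := by
        rw [cyclotomic_prime_mul_prime_mul_X_pow_sub_one_mul R hp hq hpq]
        ring
    _ = (X ^ p - 1) ^ 3 * (X ^ (p ^ 2 * q) - 1) ^ 2 * (X ^ (p * q) - 1) := by
        rw [cyclotomic_prime_mul_X_sub_one]
        ring

theorem X_pow_dvd_relabelingCandidate_mul_X_sub_one_sq_sub (hp : p.Prime) (hq : q.Prime)
    (hpq : p ≠ q) :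
    X ^ (2 * p) ∣ relabelingCandidate R p q * (X - 1) ^ 2 - (1 - 3 * X ^ p) := by
  rw [← Ideal.Quotient.eq_zero_iff_dvd]
  set π := Ideal.Quotient.mk (Ideal.span {(X : R[X]) ^ (2 * p)})
  have hx : π X ^ (2 * p) = 0 := by
    rw [← map_pow, Ideal.Quotient.eq_zero_iff_dvd]
  have vanish {n : ℕ} (hn : 2 * p ≤ n) : π X ^ n = 0 := pow_eq_zero_of_le hn hx
  have h := congrArg π (relabelingCandidate_mul_sq R hp hq hpq)
  simp only [map_mul, map_sub, map_pow, map_one] at h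
  rw [vanish (by nlinarith [hp.two_le] : 2 * p ≤ p ^ 2),
    vanish (by nlinarith [hq.two_le] : 2 * p ≤ p * q),
    vanish (by nlinarith [hp.two_le, hq.two_le] : 2 * p ≤ p ^ 2 * q)] at h
  simp only [map_mul, map_sub, map_pow, map_one, map_ofNat]
  linear_combination h + (3 - π X ^ p) * hx

end Cyclotomic

section TruncatedInverse

variable {R : Type*} [CommRing R]

theorem X_sub_one_sq_mul_sum_range (m : ℕ) :
    ((X : R[X]) - 1) ^ 2 * ∑ n ∈ Finset.range m, C ((n : R) + 1) * X ^ n =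
      1 - C ((m : R) + 1) * X ^ m + C (m : R) * X ^ (m + 1) := by
  induction m with
  | zero => simp
  | succ m ih =>
    rw [Finset.sum_range_succ, mul_add, ih]
    simp only [Nat.cast_add, Nat.cast_one, map_add, map_one]
    ring

theorem X_pow_dvd_sub_mul_sum_range_of_X_pow_dvd {N : ℕ} {f g : R[X]}
    (h : X ^ N ∣ f * (X - 1) ^ 2 - g) :
    X ^ N ∣ f - g * ∑ n ∈ Finset.range N, C ((n : R) + 1) * X ^ n := by
  set w := ∑ n ∈ Finset.range N, C ((n : R) + 1) * X ^ n
  have hw : 1 - (X - 1) ^ 2 * w = X ^ N * (C ((N : R) + 1) - C (N : R) * X) := by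
    rw [X_sub_one_sq_mul_sum_range]; ring
  have : f - g * w = f * (1 - (X - 1) ^ 2 * w) + (f * (X - 1) ^ 2 - g) * w := by ring
  rw [this, hw]
  exact dvd_add ((dvd_mul_right _ _).mul_left f) (h.mul_right w)

theorem coeff_sum_range_C_mul_X_pow (a : ℕ → R) {m k : ℕ} (hk : k < m) :
    (∑ n ∈ Finset.range m, C (a n) * X ^ n).coeff k = a k := by
  simp [hk]

end TruncatedInverse

theorem coeff_relabelingCandidate (R : Type*) [CommRing R] {p q : ℕ} (hp : p.Prime)
    (hq : q.Prime) (hpq : p ≠ q) :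
    (relabelingCandidate R p q).coeff (2 * p - 1) = -(p : R) := by
  have hp1 := hp.one_le
  have hdvd := X_pow_dvd_sub_mul_sum_range_of_X_pow_dvd
    (X_pow_dvd_relabelingCandidate_mul_X_sub_one_sq_sub R hp hq hpq)
  have hcoeff := X_pow_dvd_iff.mp hdvd (2 * p - 1) (by omega)
  rw [coeff_sub, sub_eq_zero] at hcoeff
  rw [hcoeff, sub_mul, one_mul, mul_assoc, coeff_sub, coeff_ofNat_mul, coeff_X_pow_mul',
    if_pos (by omega), show 2 * p - 1 - p = p - 1 by omega,
    coeff_sum_range_C_mul_X_pow _ (by omega), coeff_sum_range_C_mul_X_pow _ (by omega)]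
  push_cast [Nat.cast_sub hp1, Nat.cast_sub (by omega : 1 ≤ 2 * p)]
  ring

theorem A2012_neg_coeff (p q : ℕ) (hp : p.Prime) (hq : q.Prime) (hpq : p ≠ q) :
    (∃ n : ℕ, (cyclotomic q ℤ * cyclotomic p ℤ ^ 2 * cyclotomic (p * q) ℤ *
        cyclotomic (p ^ 2 * q) ℤ ^ 2).coeff n < 0) ∧
      (cyclotomic q ℤ * cyclotomic p ℤ ^ 2 * cyclotomic (p * q) ℤ *
        cyclotomic (p ^ 2 * q) ℤ ^ 2).coeff (2 * p - 1) = -(p : ℤ) := by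
  have hcoeff : (cyclotomic q ℤ * cyclotomic p ℤ ^ 2 * cyclotomic (p * q) ℤ *
      cyclotomic (p ^ 2 * q) ℤ ^ 2).coeff (2 * p - 1) = -(p : ℤ) :=
    coeff_relabelingCandidate ℤ hp hq hpq
  exact ⟨⟨2 * p - 1, by simp [hcoeff, hp.pos]⟩, hcoeff⟩
end
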